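/- Let (Π_n)_{n∈ℕ} be a family of normal expanded natural deduction proofs in M⊃ such that each Π_n proves a formula α_n with height(Π_n) ≤ |α_n|, and suppose the family is super-polynomial: for every p ∈ ℕ with p > 0 there is n0 such that for all n > n0, |Π_n| > |α_n|^p. Then for every p ∈ ℕ with p > 3, for all but finitely many n there exist a sub-derivation Σ of Π_n and a level μ of Π_n such that at least |α_n|^{p-3} instances of Σ occur at level μ in Π_n. -/

import Mathlib

/-- Formulas of minimal implicational logic M⊃. -/
inductive MFormula : Type
  | var : ℕ → MFormula
  | imp : MFormula → MFormula → MFormula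
deriving DecidableEq

namespace MFormula

/-- Size of a formula: number of vertices of its syntax tree. -/
def size : MFormula → ℕ
  | .var _ => 1
  | .imp a b => a.size + b.size + 1

/-- Subformula relation. -/
inductive Subf : MFormula → MFormula → Prop
  | refl (t : MFormula) : Subf t t
  | impL {s a b : MFormula} : Subf s a → Subf s (imp a b)
  | impR {s a b : MFormula} : Subf s b → Subf s (imp a b)

/-- The finite set of subformulas of a formula. -/
def subformulas : MFormula → Finset MFormula
  | .var n => {.var n}
  | .imp a b => insert (imp a b) (a.subformulas ∪ b.subformulas)

end MFormula

/-- Natural deduction derivation trees for M⊃.  A leaf is an assumption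
occurrence, carrying its formula and `none` if it stays open, or `some n`
if it is discharged by the `n`-th ⊃-Intro application below it (de Bruijn
style, counting enclosing ⊃-Intro applications from the leaf downwards).
`elim a b` applies ⊃-Elim with minor premise `a` and major premise `b`;
`intro A t` applies ⊃-Intro discharging (the marked occurrences of) `A`. -/
inductive NDTree : Type
  | leaf : MFormula → Option ℕ → NDTree
  | elim : NDTree → NDTree → NDTree
  | intro : MFormula → NDTree → NDTree
deriving DecidableEq

namespace NDTree

/-- Conclusion of a derivation tree relative to the list of formulas
introduced by enclosing ⊃-Intro applications (innermost first);
`none` if the tree is not a well-formed derivation. -/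
def concl : NDTree → List MFormula → Option MFormula
  | .leaf A none, _ => some A
  | .leaf A (some n), ctx => if ctx[n]? = some A then some A else none
  | .elim a b, ctx =>
      match concl a ctx, concl b ctx with
      | some x, some (.imp p q) => if p = x then some q else none
      | _, _ => none
  | .intro A t, ctx => (concl t (A :: ctx)).map (fun B => MFormula.imp A B)

/-- Size of a derivation: its number of nodes. -/
def size : NDTree → ℕ
  | .leaf _ _ => 1
  | .elim a b => a.size + b.size + 1
  | .intro _ t => t.size + 1

/-- Height of a derivation: maximal number of edges on a root-to-leaf path. -/
def height : NDTree → ℕ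
  | .leaf _ _ => 0
  | .elim a b => max a.height b.height + 1
  | .intro _ t => t.height + 1

/-- Open assumptions of a subtree sitting below `d` of its own
⊃-Intro applications (at top level `d = 0`): leaves discharged by no
⊃-Intro of the subtree itself. -/
def openAssumAux : NDTree → ℕ → Finset MFormula
  | .leaf A none, _ => {A}
  | .leaf A (some n), d => if d ≤ n then {A} else ∅
  | .elim a b, d => openAssumAux a d ∪ openAssumAux b d
  | .intro _ t, d => openAssumAux t (d + 1)

/-- The set of open (undischarged) assumptions of a derivation. -/
def openAssum (t : NDTree) : Finset MFormula := openAssumAux t 0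

/-- A derivation is normal if no formula occurrence is simultaneously the
conclusion of a ⊃-Intro and the major premise of a ⊃-Elim. -/
def Normal : NDTree → Prop
  | .leaf _ _ => True
  | .elim a b => Normal a ∧ Normal b ∧ ∀ A u, b ≠ .intro A u
  | .intro _ t => Normal t

/-- `T` is a proof of `α`: a derivation with conclusion `α` and
no open assumptions. -/
def IsProofOf (t : NDTree) (α : MFormula) : Prop :=
  concl t [] = some α ∧ openAssum t = ∅

/-- A normal derivation (in context `ctx`) is expanded if every minimal
formula, i.e. every formula occurrence that is both the conclusion of a
⊃-Elim and the premise of a ⊃-Intro, is a propositional variable. -/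
def Expanded : NDTree → List MFormula → Prop
  | .leaf _ _, _ => True
  | .elim a b, ctx => Expanded a ctx ∧ Expanded b ctx
  | .intro A t, ctx => Expanded t (A :: ctx) ∧
      (∀ u v, t = .elim u v → ∃ i, concl t (A :: ctx) = some (.var i))

/-- `Subtree s t`: `s` is a sub-derivation (a node of `t` together with
everything above it) of `t`. -/
inductive Subtree : NDTree → NDTree → Prop
  | refl (t : NDTree) : Subtree t t
  | elimL {s a b : NDTree} : Subtree s a → Subtree s (.elim a b)
  | elimR {s a b : NDTree} : Subtree s b → Subtree s (.elim a b)
  | intro {s : NDTree} {A : MFormula} {t : NDTree} : Subtree s t → Subtree s (.intro A t)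

/-- Number of instances (sub-derivation occurrences identical to `s`
as labeled trees) of `s` in a derivation. -/
def countInst (s : NDTree) : NDTree → ℕ
  | .leaf A o => if NDTree.leaf A o = s then 1 else 0
  | .elim a b => (if NDTree.elim a b = s then 1 else 0) + countInst s a + countInst s b
  | .intro A t => (if NDTree.intro A t = s then 1 else 0) + countInst s t

/-- Number of instances of `s` occurring at level (distance from the root) `μ`. -/
def countInstAt (s : NDTree) : NDTree → ℕ → ℕ
  | t, 0 => if t = s then 1 else 0
  | .leaf _ _, _ + 1 => 0
  | .elim a b, n + 1 => countInstAt s a n + countInstAt s b n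
  | .intro _ t, n + 1 => countInstAt s t n

/-- `OccAt T ctx s ctx'` : `s` occurs in `T` (whose own context is `ctx`)
as a node-with-everything-above-it, with enclosing-intro context `ctx'`. -/
inductive OccAt : NDTree → List MFormula → NDTree → List MFormula → Prop
  | refl (t : NDTree) (ctx : List MFormula) : OccAt t ctx t ctx
  | elimL {T : NDTree} {ctx : List MFormula} {a b : NDTree} {ctx' : List MFormula} :
      OccAt T ctx (.elim a b) ctx' → OccAt T ctx a ctx'
  | elimR {T : NDTree} {ctx : List MFormula} {a b : NDTree} {ctx' : List MFormula} :
      OccAt T ctx (.elim a b) ctx' → OccAt T ctx b ctx'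
  | intro {T : NDTree} {ctx : List MFormula} {A : MFormula} {t : NDTree} {ctx' : List MFormula} :
      OccAt T ctx (.intro A t) ctx' → OccAt T ctx t (A :: ctx')

/-- Each node of a derivation lies on a unique branch; branches are in
bijection with their endpoints: the root of the derivation and the minor
premises of ⊃-Elim applications. -/
def IsBranchEndpoint (T s : NDTree) (ctx : List MFormula) : Prop :=
  (s = T ∧ ctx = []) ∨ ∃ u, OccAt T [] (NDTree.elim s u) ctx

/-- The (top-down) sequence of formulas of the branch ending at the root of
the given subtree: trace upwards through premises of ⊃-Intro and major
premises of ⊃-Elim up to a top-formula. -/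
def branchSeq : NDTree → List MFormula → Option (List MFormula)
  | .leaf A o, ctx => (concl (.leaf A o) ctx).map (fun c => [c])
  | .elim a b, ctx =>
      match branchSeq b ctx, concl (.elim a b) ctx with
      | some l, some c => some (l ++ [c])
      | _, _ => none
  | .intro A t, ctx =>
      match branchSeq t (A :: ctx), concl (.intro A t) ctx with
      | some l, some c => some (l ++ [c])
      | _, _ => none

/-- The (top-down) E-part of the branch ending at the root of the given
subtree: the top-formula and the successive conclusions of major-premise
⊃-Elim steps, ending at the minimal formula of the branch. -/
def epart : NDTree → List MFormula → Option (List MFormula)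
  | .leaf A o, ctx => (concl (.leaf A o) ctx).map (fun c => [c])
  | .elim a b, ctx =>
      match epart b ctx, concl (.elim a b) ctx with
      | some l, some c => some (l ++ [c])
      | _, _ => none
  | .intro A t, ctx => epart t (A :: ctx)

/-- Number of ⊃-Intro applications forming the I-part at the bottom of a
branch endpoint subtree. -/
def introCount : NDTree → ℕ
  | .intro _ t => introCount t + 1
  | _ => 0

/-- Count of branch endpoints strictly inside the given subtree (i.e. minor
premises of ⊃-Elim) whose branch has formula sequence `b`. -/
def brCount (b : List MFormula) : NDTree → List MFormula → ℕ
  | .leaf _ _, _ => 0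
  | .elim a c, ctx =>
      (if branchSeq a ctx = some b then 1 else 0) + brCount b a ctx + brCount b c ctx
  | .intro A t, ctx => brCount b t (A :: ctx)

/-- Total number of branches of `T` whose formula sequence is `b`. -/
def brTotal (b : List MFormula) (T : NDTree) : ℕ :=
  (if branchSeq T [] = some b then 1 else 0) + brCount b T []

/-- Count of branch endpoints strictly inside the given subtree (whose root
is at level `d` of the ambient derivation) whose branch has formula
sequence `b` and whose minimal formula occurs at level `μ`. -/
def brMinCount (b : List MFormula) (μ : ℕ) : NDTree → List MFormula → ℕ → ℕ
  | .leaf _ _, _, _ => 0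
  | .elim a c, ctx, d =>
      (if branchSeq a ctx = some b ∧ d + 1 + introCount a = μ then 1 else 0)
      + brMinCount b μ a ctx (d + 1) + brMinCount b μ c ctx (d + 1)
  | .intro A t, ctx, d => brMinCount b μ t (A :: ctx) (d + 1)

/-- Total number of branches of `T` with formula sequence `b` whose minimal
formula occurs at level `μ` of `T`. -/
def brMinTotal (b : List MFormula) (μ : ℕ) (T : NDTree) : ℕ :=
  (if branchSeq T [] = some b ∧ introCount T = μ then 1 else 0) + brMinCount b μ T [] 0

/-- No occurrence of `A` in the given subtree (sitting at intro-depth `d`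
below a fixed ⊃-Intro application) is an open assumption of the subtree
escaping that ⊃-Intro: every leaf labeled `A` is discharged by an
⊃-Intro at distance at most `d`. -/
def NoOpenBeyond (A : MFormula) : NDTree → ℕ → Prop
  | .leaf B o, d => B = A → ∃ n, o = some n ∧ n ≤ d
  | .elim a b, d => NoOpenBeyond A a d ∧ NoOpenBeyond A b d
  | .intro _ t, d => NoOpenBeyond A t (d + 1)

/-- Every ⊃-Intro application of the derivation is greedy: it discharges
all occurrences of its assumption that are open in the sub-derivation of
its premise. -/
def Greedy : NDTree → Prop
  | .leaf _ _ => True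
  | .elim a b => Greedy a ∧ Greedy b
  | .intro A t => NoOpenBeyond A t 0 ∧ Greedy t

/-- A matrix of `T`: a sub-derivation all of whose instances in `T` occur
at a single level. -/
def IsMatrix (s T : NDTree) : Prop :=
  Subtree s T ∧ ∃ μ, ∀ ν, 0 < countInstAt s T ν → ν = μ

end NDTree

/-- A Kripke model for M⊃: a preordered set of worlds with a monotone
valuation on propositional variables. -/
structure KModel where
  World : Type
  le : World → World → Prop
  le_refl : ∀ w, le w w
  le_trans : ∀ {a b c}, le a b → le b c → le a c
  val : World → ℕ → Prop
  mono : ∀ {w w'}, le w w' → ∀ p, val w p → val w' p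

/-- Kripke satisfaction for M⊃. -/
def KSat (M : KModel) : MFormula → M.World → Prop
  | .var p, w => M.val w p
  | .imp a b, w => ∀ w', M.le w w' → KSat M a w' → KSat M b w'

/-- Semantic entailment: every world of every Kripke model satisfying all
of `Δ` satisfies `β`. -/
def KEntails (Δ : Set MFormula) (β : MFormula) : Prop :=
  ∀ (M : KModel) (w : M.World), (∀ δ ∈ Δ, KSat M δ w) → KSat M β w

/-! In a normal proof of `α` every assumption leaf is discharged, its index is below the height,
hence below `|α|`, and by the subformula property its formula is a subformula of `α`. So at most
`|α|²` distinct leaves occur, on at most `|α| + 1` levels. A derivation has at least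
`size / (height + 1)` leaves, so when the size exceeds `|α|^(p+3)` the pigeonhole principle puts
more than `|α|^(p-3)` identical leaves on a common level. -/

namespace MFormula

theorem one_le_size (t : MFormula) : 1 ≤ t.size := by
  cases t <;> simp [size]

theorem Subf.trans {a b c : MFormula} (hab : Subf a b) (hbc : Subf b c) : Subf a c := by
  induction hbc with
  | refl => exact hab
  | impL _ ih => exact .impL ih
  | impR _ ih => exact .impR ih

theorem mem_subformulas_self (t : MFormula) : t ∈ t.subformulas := by
  cases t <;> simp [subformulas]

theorem Subf.mem_subformulas {s t : MFormula} (h : Subf s t) : s ∈ t.subformulas := by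
  induction h with
  | refl => exact mem_subformulas_self _
  | impL _ ih => simp [subformulas, ih]
  | impR _ ih => simp [subformulas, ih]

theorem card_subformulas_le_size (t : MFormula) : t.subformulas.card ≤ t.size := by
  induction t with
  | var n => simp [subformulas, size]
  | imp a b iha ihb =>
    calc (imp a b).subformulas.card
        ≤ (a.subformulas ∪ b.subformulas).card + 1 := Finset.card_insert_le _ _
      _ ≤ a.subformulas.card + b.subformulas.card + 1 := by grw [Finset.card_union_le]
      _ ≤ (imp a b).size := by simp only [size]; omega

end MFormula

namespace NDTree

open MFormula

theorem exists_of_concl_elim_eq_some {a b : NDTree} {ctx : List MFormula} {c : MFormula}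
    (h : concl (.elim a b) ctx = some c) :
    ∃ x, concl a ctx = some x ∧ concl b ctx = some (.imp x c) := by
  simp only [concl] at h
  split at h
  · next x p q ha hb =>
    split_ifs at h with hpx
    cases h
    exact ⟨x, ha, hpx ▸ hb⟩
  · cases h

theorem exists_of_concl_intro_eq_some {A : MFormula} {t : NDTree} {ctx : List MFormula}
    {c : MFormula} (h : concl (.intro A t) ctx = some c) :
    ∃ B, concl t (A :: ctx) = some B ∧ c = .imp A B := by
  simp only [concl, Option.map_eq_some_iff] at h
  obtain ⟨B, hB, rfl⟩ := h
  exact ⟨B, hB, rfl⟩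

theorem concl_leaf_eq_some {A : MFormula} {o : Option ℕ} {ctx : List MFormula} {c : MFormula}
    (h : concl (.leaf A o) ctx = some c) : c = A ∧ ∀ n, o = some n → ctx[n]? = some A := by
  cases o with
  | none => simp only [concl, Option.some.injEq] at h; simp [h]
  | some n =>
    simp only [concl] at h
    split_ifs at h with hn
    cases h
    simpa using hn

theorem mem_openAssumAux_of_subtree {A : MFormula} {t : NDTree}
    (h : Subtree (.leaf A none) t) (d : ℕ) : A ∈ openAssumAux t d := by
  induction h generalizing d with
  | refl => simp [openAssumAux]
  | elimL _ ih => simp [openAssumAux, ih]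
  | elimR _ ih => simp [openAssumAux, ih]
  | intro _ ih => exact ih (d + 1)

/-- An assumption open at intro-depth `d` but not at `d + 1` is discharged by the `d`-th
enclosing ⊃-Intro, which introduces `ctx[d]`. -/
theorem mem_openAssumAux_succ_or {t : NDTree} {ctx : List MFormula} {c : MFormula}
    (ht : concl t ctx = some c) {d : ℕ} {B : MFormula} (hB : B ∈ openAssumAux t d) :
    B ∈ openAssumAux t (d + 1) ∨ ctx[d]? = some B := by
  induction t generalizing ctx c d with
  | leaf A o =>
    obtain ⟨rfl, hctx⟩ := concl_leaf_eq_some ht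
    cases o with
    | none => simp_all [openAssumAux]
    | some n =>
      simp only [openAssumAux] at hB ⊢
      split_ifs at hB with hdn
      · obtain rfl := Finset.mem_singleton.mp hB
        rcases hdn.lt_or_eq with hlt | rfl
        · exact .inl (by simp [hlt])
        · exact .inr (hctx _ rfl)
      · simp at hB
  | elim a b iha ihb =>
    obtain ⟨x, ha, hb⟩ := exists_of_concl_elim_eq_some ht
    simp only [openAssumAux, Finset.mem_union] at hB ⊢
    rcases hB with hB | hB
    · exact (iha ha hB).imp_left .inl
    · exact (ihb hb hB).imp_left .inr
  | intro A t ih =>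
    obtain ⟨B', ht', -⟩ := exists_of_concl_intro_eq_some ht
    simpa [openAssumAux] using ih ht' hB

/-- The main branch of a normal derivation whose last rule is not ⊃-Intro consists of
major premises of ⊃-Elim, so its conclusion is a subformula of its top-formula. -/
theorem Normal.exists_subf_openAssumAux {t : NDTree} (hn : t.Normal) {ctx : List MFormula}
    {c : MFormula} (ht : concl t ctx = some c) (hintro : ∀ A u, t ≠ .intro A u) :
    ∃ B ∈ openAssumAux t 0, Subf c B := by
  induction t generalizing c with
  | leaf A o =>
    obtain ⟨rfl, -⟩ := concl_leaf_eq_some ht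
    exact ⟨c, by cases o <;> simp [openAssumAux], .refl c⟩
  | elim a b _ ihb =>
    obtain ⟨x, -, hb⟩ := exists_of_concl_elim_eq_some ht
    obtain ⟨B, hB, hcB⟩ := ihb hn.2.1 hb hn.2.2
    exact ⟨B, by simp [openAssumAux, hB], (Subf.impR (.refl c)).trans hcB⟩
  | intro A u _ => exact absurd rfl (hintro A u)

theorem Normal.subf_of_subtree_leaf {t : NDTree} (hn : t.Normal) {ctx : List MFormula}
    {c : MFormula} (ht : concl t ctx = some c) {A : MFormula} {o : Option ℕ}
    (hs : Subtree (.leaf A o) t) : Subf A c ∨ ∃ B ∈ openAssumAux t 0, Subf A B := by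
  induction t generalizing ctx c with
  | leaf A' o' =>
    cases hs
    exact .inl ((concl_leaf_eq_some ht).1 ▸ .refl A)
  | elim a b iha ihb =>
    obtain ⟨x, ha, hb⟩ := exists_of_concl_elim_eq_some ht
    obtain ⟨B, hB, hxcB⟩ := Normal.exists_subf_openAssumAux hn.2.1 hb hn.2.2
    have hB' : B ∈ openAssumAux (.elim a b) 0 := by simp [openAssumAux, hB]
    cases hs with
    | elimL hs =>
      rcases iha hn.1 ha hs with hAx | ⟨B', hB'', hAB'⟩
      · exact .inr ⟨B, hB', (Subf.impL hAx).trans hxcB⟩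
      · exact .inr ⟨B', by simp [openAssumAux, hB''], hAB'⟩
    | elimR hs =>
      rcases ihb hn.2.1 hb hs with hAx | ⟨B', hB'', hAB'⟩
      · exact .inr ⟨B, hB', hAx.trans hxcB⟩
      · exact .inr ⟨B', by simp [openAssumAux, hB''], hAB'⟩
  | intro A₀ u ih =>
    obtain ⟨B₀, hu, rfl⟩ := exists_of_concl_intro_eq_some ht
    cases hs with
    | intro hs =>
      rcases ih hn hu hs with hAB₀ | ⟨B, hB, hAB⟩
      · exact .inl (.impR hAB₀)
      · rcases mem_openAssumAux_succ_or hu hB with hB' | hB'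
        · exact .inr ⟨B, hB', hAB⟩
        · cases Option.some.inj hB'
          exact .inl (.impL hAB)

theorem lt_height_add_length_of_subtree_leaf {t : NDTree} {ctx : List MFormula} {c : MFormula}
    (ht : concl t ctx = some c) {A : MFormula} {n : ℕ} (hs : Subtree (.leaf A (some n)) t) :
    n < t.height + ctx.length := by
  induction t generalizing ctx c with
  | leaf A' o' =>
    cases hs
    have hn := (concl_leaf_eq_some ht).2 n rfl
    simpa [height] using (List.getElem?_eq_some_iff.mp hn).1
  | elim a b iha ihb =>
    obtain ⟨x, ha, hb⟩ := exists_of_concl_elim_eq_some ht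
    cases hs with
    | elimL hs => have := iha ha hs; simp only [height]; omega
    | elimR hs => have := ihb hb hs; simp only [height]; omega
  | intro A₀ u ih =>
    obtain ⟨B₀, hu, -⟩ := exists_of_concl_intro_eq_some ht
    cases hs with
    | intro hs => have := ih hu hs; simp only [height, List.length_cons] at this ⊢; omega

def subformulaLeaves (α : MFormula) : Finset NDTree :=
  (α.subformulas ×ˢ Finset.range α.size).image fun x => .leaf x.1 (some x.2)

theorem card_subformulaLeaves_le (α : MFormula) :
    (subformulaLeaves α).card ≤ α.size * α.size :=
  calc (subformulaLeaves α).card ≤ (α.subformulas ×ˢ Finset.range α.size).card :=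
        Finset.card_image_le
    _ ≤ α.size * α.size := by
        rw [Finset.card_product, Finset.card_range]
        exact Nat.mul_le_mul_right _ (card_subformulas_le_size α)

theorem IsProofOf.mem_subformulaLeaves {T : NDTree} {α : MFormula} (hT : T.IsProofOf α)
    (hn : T.Normal) (hh : T.height ≤ α.size) {A : MFormula} {o : Option ℕ}
    (hs : Subtree (.leaf A o) T) : .leaf A o ∈ subformulaLeaves α := by
  obtain ⟨hconcl, hopen⟩ := hT
  have hopen : openAssumAux T 0 = ∅ := hopen
  cases o with
  | none => simpa [hopen] using mem_openAssumAux_of_subtree hs 0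
  | some m =>
    have hA : Subf A α := by simpa [hopen] using hn.subf_of_subtree_leaf hconcl hs
    have hm := lt_height_add_length_of_subtree_leaf hconcl hs
    simp only [List.length_nil, add_zero] at hm
    exact Finset.mem_image.mpr ⟨(A, m), by simp [hA.mem_subformulas]; omega, rfl⟩

def leafCount : NDTree → ℕ
  | .leaf _ _ => 1
  | .elim a b => leafCount a + leafCount b
  | .intro _ t => leafCount t

theorem one_le_leafCount (t : NDTree) : 1 ≤ leafCount t := by
  induction t with
  | leaf => simp [leafCount]
  | elim a b iha _ => simp only [leafCount]; omega
  | intro _ _ ih => simpa [leafCount] using ih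

/-- Every node lies on one of the `leafCount t` root-to-leaf paths. -/
theorem size_le_height_succ_mul_leafCount (t : NDTree) :
    t.size ≤ (t.height + 1) * leafCount t := by
  induction t with
  | leaf => simp [size, height, leafCount]
  | elim a b iha ihb =>
    have := one_le_leafCount a
    simp only [size, height, leafCount]
    have ha : (a.height + 1) * leafCount a ≤ (max a.height b.height + 1) * leafCount a := by
      gcongr; exact le_max_left _ _
    have hb : (b.height + 1) * leafCount b ≤ (max a.height b.height + 1) * leafCount b := by
      gcongr; exact le_max_right _ _
    nlinarith
  | intro _ u ih =>
    have := one_le_leafCount u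
    simp only [size, height, leafCount]
    grw [ih]
    nlinarith

theorem subtree_of_countInstAt_pos {s t : NDTree} {μ : ℕ} (h : 0 < countInstAt s t μ) :
    Subtree s t := by
  induction μ generalizing t with
  | zero =>
    have h0 : countInstAt s t 0 = if t = s then 1 else 0 := by cases t <;> rfl
    rw [h0] at h
    split_ifs at h with hts
    · exact hts ▸ .refl _
    · omega
  | succ ν ih =>
    cases t with
    | leaf => simp [countInstAt] at h
    | elim a b =>
      simp only [countInstAt] at h
      rcases Nat.eq_zero_or_pos (countInstAt s a ν) with ha | ha
      · exact .elimR (ih (t := b) (by omega))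
      · exact .elimL (ih ha)
    | intro => exact .intro (ih h)

theorem leafCount_le_sum_countInstAt (U : Finset NDTree) {t : NDTree}
    (hU : ∀ A o, Subtree (.leaf A o) t → .leaf A o ∈ U) {H : ℕ} (hH : t.height ≤ H) :
    leafCount t ≤ ∑ μ ∈ Finset.range (H + 1), ∑ s ∈ U, countInstAt s t μ := by
  induction t generalizing H with
  | leaf A o =>
    calc leafCount (.leaf A o) = ∑ s ∈ U, countInstAt s (.leaf A o) 0 := by
          simp [leafCount, countInstAt, hU A o (.refl _)]
      _ ≤ _ := Finset.single_le_sum (f := fun μ => ∑ s ∈ U, countInstAt s (.leaf A o) μ)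
          (fun _ _ => Nat.zero_le _) (by simp)
  | elim a b iha ihb =>
    obtain ⟨H, rfl⟩ : ∃ H', H = H' + 1 := ⟨H - 1, by simp only [height] at hH; omega⟩
    simp only [height] at hH
    have ha := iha (fun A o hs => hU A o (.elimL hs)) (H := H) (by omega)
    have hb := ihb (fun A o hs => hU A o (.elimR hs)) (H := H) (by omega)
    rw [Finset.sum_range_succ']
    simp only [countInstAt, Finset.sum_add_distrib, leafCount]
    omega
  | intro A u ih =>
    obtain ⟨H, rfl⟩ : ∃ H', H = H' + 1 := ⟨H - 1, by simp only [height] at hH; omega⟩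
    have hu := ih (fun A o hs => hU A o (.intro hs)) (H := H) (by simp only [height] at hH; omega)
    rw [Finset.sum_range_succ']
    simp only [countInstAt, leafCount]
    omega

theorem exists_lt_countInstAt {t : NDTree} (U : Finset NDTree)
    (hU : ∀ A o, Subtree (.leaf A o) t → .leaf A o ∈ U) {H B : ℕ} (hH : t.height ≤ H)
    (hB : (H + 1) * (U.card * B) < leafCount t) :
    ∃ s μ, Subtree s t ∧ B < countInstAt s t μ := by
  have hsum := leafCount_le_sum_countInstAt U hU hH
  rw [← Finset.sum_product'] at hsum
  obtain ⟨⟨μ, s⟩, -, hs⟩ := Finset.exists_lt_of_sum_lt (s := Finset.range (H + 1) ×ˢ U)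
    (f := fun _ => B) (by simpa [mul_assoc] using hB.trans_le hsum)
  exact ⟨s, μ, subtree_of_countInstAt_pos ((Nat.zero_le B).trans_lt hs), hs⟩

end NDTree

theorem succ_sq_mul_pow_le_pow {a : ℕ} (ha : 2 ≤ a) (k : ℕ) :
    (a + 1) ^ 2 * a ^ k ≤ a ^ (k + 4) := by
  have : (a + 1) ^ 2 ≤ a ^ 4 := by
    have h : a + 1 ≤ a ^ 2 := by nlinarith
    calc (a + 1) ^ 2 ≤ (a ^ 2) ^ 2 := by gcongr
      _ = a ^ 4 := by ring
  calc (a + 1) ^ 2 * a ^ k ≤ a ^ 4 * a ^ k := by gcongr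
    _ = a ^ (k + 4) := by ring

theorem family_redundancy_general (T : ℕ → NDTree) (A : ℕ → MFormula)
    (hproof : ∀ n, (T n).IsProofOf (A n))
    (hnormal : ∀ n, (T n).Normal)
    (hheight : ∀ n, (T n).height ≤ (A n).size)
    (hsuper : ∀ p : ℕ, 0 < p → ∃ n0, ∀ n > n0, (A n).size ^ p < (T n).size) :
    ∀ p : ℕ, 3 < p → ∃ N, ∀ n ≥ N,
      ∃ (S : NDTree) (μ : ℕ),
        NDTree.Subtree S (T n) ∧ (A n).size ^ (p - 3) ≤ NDTree.countInstAt S (T n) μ := by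
  intro p hp
  obtain ⟨n0, hn0⟩ := hsuper (p + 3) (by omega)
  refine ⟨n0 + 1, fun n hn => ?_⟩
  set a := (A n).size
  rcases (A n).one_le_size.eq_or_lt with ha | ha
  · exact ⟨T n, 0, .refl _, by simp [a, ← ha, NDTree.countInstAt]⟩
  have hleaves : (a + 1) * ((NDTree.subformulaLeaves (A n)).card * a ^ (p - 3))
      < NDTree.leafCount (T n) := by
    refine Nat.lt_of_mul_lt_mul_left (a := a + 1) ?_
    calc (a + 1) * ((a + 1) * ((NDTree.subformulaLeaves (A n)).card * a ^ (p - 3)))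
        ≤ (a + 1) ^ 2 * a ^ (p - 1) := by
          have hcard : (NDTree.subformulaLeaves (A n)).card ≤ a * a :=
            NDTree.card_subformulaLeaves_le _
          grw [hcard]
          rw [show p - 1 = (p - 3) + 2 by omega]
          exact le_of_eq (by ring)
      _ ≤ a ^ (p + 3) := by
          grw [succ_sq_mul_pow_le_pow ha]
          rw [show p - 1 + 4 = p + 3 by omega]
      _ < (T n).size := hn0 n (by omega)
      _ ≤ ((T n).height + 1) * NDTree.leafCount (T n) :=
          NDTree.size_le_height_succ_mul_leafCount _
      _ ≤ (a + 1) * NDTree.leafCount (T n) := by grw [hheight n]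
  obtain ⟨S, μ, hS, hμ⟩ := NDTree.exists_lt_countInstAt _
    (fun _ _ => (hproof n).mem_subformulaLeaves (hnormal n) (hheight n)) (hheight n) hleaves
  exact ⟨S, μ, hS, hμ.le⟩

/-- every super-polynomial family of linearly height-bounded
normal expanded proofs is eventually redundant: for every p > 3, all but
finitely many members have a sub-derivation with at least |α_n|^(p-3)
instances at a common level. -/
theorem family_redundancy (T : ℕ → NDTree) (A : ℕ → MFormula)
    (hproof : ∀ n, (T n).IsProofOf (A n))
    (hnormal : ∀ n, (T n).Normal) (hexp : ∀ n, (T n).Expanded [])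
    (hheight : ∀ n, (T n).height ≤ (A n).size)
    (hsuper : ∀ p : ℕ, 0 < p → ∃ n0, ∀ n > n0, (A n).size ^ p < (T n).size) :
    ∀ p : ℕ, 3 < p → ∃ N, ∀ n ≥ N,
      ∃ (S : NDTree) (μ : ℕ),
        NDTree.Subtree S (T n) ∧ (A n).size ^ (p - 3) ≤ NDTree.countInstAt S (T n) μ :=
  family_redundancy_general T A hproof hnormal hheight hsuper
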